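/- arXiv:2303.11365 — 2 statements merged into one kernel-verified Lean document; each statement's English description precedes it below -/
import Mathlib

section
/- (Equilibrium with elasticity of substitution below 1.) Suppose γ > 1. Then every equilibrium (S_t) satisfies: S_t/(e1·G^t) → 1, r_t/(e1·G^t) → 1, P_t/(e1·G^t) → 0, R_t → ∞, and the price-rent ratio P_t/r_t → 0. -/
open Real Filter Set Topology

/-!
By homogeneity, `c_y` and `c_z` depend only on `u_t = y_t / z_t`, and
`c(y_t, z_t) = z_t·c(u_t, 1)`. Since `S_{t+1}·c_z > 0`, the equilibrium equation gives
`m·c(y_t, z_t)^γ < S_t·c_y(u_t, 1) < e1·G^t·c_y(u_t, 1)`. As long as `u_t ≥ ε`, the left side is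
at least of order `G^(γt)` (`c(·,1)` increases) and the right side is `O(G^t)` (`c_y(·,1)`
decreases), so `γ > 1` forces `u_t → 0`. Hence `y_t = o(G^t)` and `S_t ~ e1·G^t`, while
`P_t = S_{t+1}·c_z(u_t,1)/c_y(u_t,1) = o(G^t)` by the Inada condition, `c_z(·,1)` being
increasing because `c_yz > 0`. The limits of `r_t = S_t − P_t`, `R_t = S_{t+1}/P_t` and
`P_t/r_t` follow.
-/

/-- Assumption C: `c` is a positive, homogeneous of degree 1, twice continuously
differentiable function on `(0,∞)²` with partial derivatives `cy, cz > 0`, second partial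
derivatives `cyy, czz < 0`, and Inada conditions. -/
structure AssumptionC (c cy cz cyy cyz czz : ℝ → ℝ → ℝ) : Prop where
  c_pos : ∀ ⦃y z : ℝ⦄, 0 < y → 0 < z → 0 < c y z
  homog : ∀ ⦃l y z : ℝ⦄, 0 < l → 0 < y → 0 < z → c (l * y) (l * z) = l * c y z
  hderiv_y : ∀ ⦃y z : ℝ⦄, 0 < y → 0 < z → HasDerivAt (fun u => c u z) (cy y z) y
  hderiv_z : ∀ ⦃y z : ℝ⦄, 0 < y → 0 < z → HasDerivAt (fun v => c y v) (cz y z) z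
  hderiv_yy : ∀ ⦃y z : ℝ⦄, 0 < y → 0 < z → HasDerivAt (fun u => cy u z) (cyy y z) y
  hderiv_yz : ∀ ⦃y z : ℝ⦄, 0 < y → 0 < z → HasDerivAt (fun v => cy y v) (cyz y z) z
  hderiv_zy : ∀ ⦃y z : ℝ⦄, 0 < y → 0 < z → HasDerivAt (fun u => cz u z) (cyz y z) y
  hderiv_zz : ∀ ⦃y z : ℝ⦄, 0 < y → 0 < z → HasDerivAt (fun v => cz y v) (czz y z) z
  cy_pos : ∀ ⦃y z : ℝ⦄, 0 < y → 0 < z → 0 < cy y z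
  cz_pos : ∀ ⦃y z : ℝ⦄, 0 < y → 0 < z → 0 < cz y z
  cyy_neg : ∀ ⦃y z : ℝ⦄, 0 < y → 0 < z → cyy y z < 0
  czz_neg : ∀ ⦃y z : ℝ⦄, 0 < y → 0 < z → czz y z < 0
  cont2 : ContinuousOn (fun p : ℝ × ℝ => (cyy p.1 p.2, cyz p.1 p.2, czz p.1 p.2))
    {p : ℝ × ℝ | 0 < p.1 ∧ 0 < p.2}
  inada_y : ∀ ⦃z : ℝ⦄, 0 < z → Tendsto (fun y => cy y z) (𝓝[>] (0:ℝ)) atTop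
  inada_z : ∀ ⦃y : ℝ⦄, 0 < y → Tendsto (fun z => cz y z) (𝓝[>] (0:ℝ)) atTop

/-- An equilibrium: `0 < S t < e1·G^t` and the difference equation
`S_{t+1}·c_z = S_t·c_y − m·c^γ` at `(y_t, z_t) = (e1·G^t − S_t, e2·G^{t+1} + S_{t+1})`. -/
def IsEquilibrium (c cy cz : ℝ → ℝ → ℝ) (e1 e2 G γ m : ℝ) (S : ℕ → ℝ) : Prop :=
  ∀ t : ℕ, 0 < S t ∧ S t < e1 * G ^ t ∧
    S (t + 1) * cz (e1 * G ^ t - S t) (e2 * G ^ (t + 1) + S (t + 1)) =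
      S t * cy (e1 * G ^ t - S t) (e2 * G ^ (t + 1) + S (t + 1)) -
        m * c (e1 * G ^ t - S t) (e2 * G ^ (t + 1) + S (t + 1)) ^ γ

/-- The rent `r_t = m·c(y_t,z_t)^γ / c_y(y_t,z_t)`. -/
noncomputable def rent (c cy : ℝ → ℝ → ℝ) (e1 e2 G γ m : ℝ) (S : ℕ → ℝ) (t : ℕ) : ℝ :=
  m * c (e1 * G ^ t - S t) (e2 * G ^ (t + 1) + S (t + 1)) ^ γ /
    cy (e1 * G ^ t - S t) (e2 * G ^ (t + 1) + S (t + 1))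

/-- The housing price `P_t = S_t − r_t`. -/
noncomputable def price (c cy : ℝ → ℝ → ℝ) (e1 e2 G γ m : ℝ) (S : ℕ → ℝ) (t : ℕ) : ℝ :=
  S t - rent c cy e1 e2 G γ m S t

/-- The gross interest rate `R_t = S_{t+1}/P_t`. -/
noncomputable def irate (c cy : ℝ → ℝ → ℝ) (e1 e2 G γ m : ℝ) (S : ℕ → ℝ) (t : ℕ) : ℝ :=
  S (t + 1) / price c cy e1 e2 G γ m S t

lemma HasDerivAt.eq_of_comp_mul_eq {F H : ℝ → ℝ} {F' H' l x : ℝ} (hl : l ≠ 0)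
    (hF : HasDerivAt F F' (l * x)) (hH : HasDerivAt H H' x)
    (heq : ∀ᶠ u in 𝓝 x, F (l * u) = l * H u) : F' = H' := by
  have hFl : HasDerivAt (fun u => F (l * u)) (F' * l) x := by
    simpa [Function.comp_def] using hF.comp x ((hasDerivAt_id x).const_mul l)
  have hHl := (hH.const_mul l).congr_of_eventuallyEq heq
  exact mul_right_cancel₀ hl (by linarith [hFl.unique hHl])

lemma monotoneOn_of_hasDerivAt_nonneg_of_isOpen {D : Set ℝ} (hD : Convex ℝ D) (hDo : IsOpen D)
    {f f' : ℝ → ℝ} (hf : ∀ x ∈ D, HasDerivAt f (f' x) x) (hf' : ∀ x ∈ D, 0 ≤ f' x) :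
    MonotoneOn f D :=
  monotoneOn_of_hasDerivWithinAt_nonneg hD (HasDerivAt.continuousOn hf)
    (by simpa [hDo.interior_eq] using fun x hx => (hf x hx).hasDerivWithinAt)
    (by simpa [hDo.interior_eq] using hf')

lemma antitoneOn_of_hasDerivAt_nonpos_of_isOpen {D : Set ℝ} (hD : Convex ℝ D) (hDo : IsOpen D)
    {f f' : ℝ → ℝ} (hf : ∀ x ∈ D, HasDerivAt f (f' x) x) (hf' : ∀ x ∈ D, f' x ≤ 0) :
    AntitoneOn f D :=
  antitoneOn_of_hasDerivWithinAt_nonpos hD (HasDerivAt.continuousOn hf)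
    (by simpa [hDo.interior_eq] using fun x hx => (hf x hx).hasDerivWithinAt)
    (by simpa [hDo.interior_eq] using hf')

namespace AssumptionC

variable {c cy cz cyy cyz czz : ℝ → ℝ → ℝ} {l y z : ℝ}

lemma cy_mul (hC : AssumptionC c cy cz cyy cyz czz) (hl : 0 < l) (hy : 0 < y) (hz : 0 < z) :
    cy (l * y) (l * z) = cy y z :=
  HasDerivAt.eq_of_comp_mul_eq (F := fun u => c u (l * z)) hl.ne'
    (hC.hderiv_y (mul_pos hl hy) (mul_pos hl hz)) (hC.hderiv_y hy hz)
    (by filter_upwards [Ioi_mem_nhds hy] with u hu using hC.homog hl hu hz)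

lemma cz_mul (hC : AssumptionC c cy cz cyy cyz czz) (hl : 0 < l) (hy : 0 < y) (hz : 0 < z) :
    cz (l * y) (l * z) = cz y z :=
  HasDerivAt.eq_of_comp_mul_eq (F := fun v => c (l * y) v) hl.ne'
    (hC.hderiv_z (mul_pos hl hy) (mul_pos hl hz)) (hC.hderiv_z hy hz)
    (by filter_upwards [Ioi_mem_nhds hz] with v hv using hC.homog hl hy hv)

lemma c_eq_mul_c_div (hC : AssumptionC c cy cz cyy cyz czz) (hy : 0 < y) (hz : 0 < z) :
    c y z = z * c (y / z) 1 := by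
  simpa [mul_div_cancel₀ _ hz.ne'] using hC.homog hz (div_pos hy hz) one_pos

lemma cy_eq_cy_div (hC : AssumptionC c cy cz cyy cyz czz) (hy : 0 < y) (hz : 0 < z) :
    cy y z = cy (y / z) 1 := by
  simpa [mul_div_cancel₀ _ hz.ne'] using hC.cy_mul hz (div_pos hy hz) one_pos

lemma cz_eq_cz_div (hC : AssumptionC c cy cz cyy cyz czz) (hy : 0 < y) (hz : 0 < z) :
    cz y z = cz (y / z) 1 := by
  simpa [mul_div_cancel₀ _ hz.ne'] using hC.cz_mul hz (div_pos hy hz) one_pos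

/-- Differentiate `cy y z = cy (y / z) 1` in `z`. -/
lemma cyz_pos (hC : AssumptionC c cy cz cyy cyz czz) (hy : 0 < y) (hz : 0 < z) :
    0 < cyz y z := by
  have hdiv : HasDerivAt (fun v => y / v) (y * -(z ^ 2)⁻¹) z := by
    simpa [div_eq_mul_inv] using (hasDerivAt_inv hz.ne').const_mul y
  have hcomp := (hC.hderiv_yy (div_pos hy hz) one_pos).comp z hdiv
  have heq : (fun v => cy y v) =ᶠ[𝓝 z] fun v => cy (y / v) 1 := by
    filter_upwards [Ioi_mem_nhds hz] with v hv using hC.cy_eq_cy_div hy hv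
  rw [(hC.hderiv_yz hy hz).unique (hcomp.congr_of_eventuallyEq heq)]
  exact mul_pos_of_neg_of_neg (hC.cyy_neg (div_pos hy hz) one_pos)
    (mul_neg_of_pos_of_neg hy (neg_neg_of_pos (by positivity)))

lemma antitoneOn_cy_one (hC : AssumptionC c cy cz cyy cyz czz) :
    AntitoneOn (fun u => cy u 1) (Ioi 0) :=
  antitoneOn_of_hasDerivAt_nonpos_of_isOpen (convex_Ioi 0) isOpen_Ioi
    (fun _ hu => hC.hderiv_yy hu one_pos) (fun _ hu => (hC.cyy_neg hu one_pos).le)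

lemma monotoneOn_cz_one (hC : AssumptionC c cy cz cyy cyz czz) :
    MonotoneOn (fun u => cz u 1) (Ioi 0) :=
  monotoneOn_of_hasDerivAt_nonneg_of_isOpen (convex_Ioi 0) isOpen_Ioi
    (fun _ hu => hC.hderiv_zy hu one_pos) (fun _ hu => (hC.cyz_pos hu one_pos).le)

lemma monotoneOn_c_one (hC : AssumptionC c cy cz cyy cyz czz) :
    MonotoneOn (fun u => c u 1) (Ioi 0) :=
  monotoneOn_of_hasDerivAt_nonneg_of_isOpen (convex_Ioi 0) isOpen_Ioi
    (fun _ hu => hC.hderiv_y hu one_pos) (fun _ hu => (hC.cy_pos hu one_pos).le)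

end AssumptionC

/-- The consumptions `y_t`, `z_t` of the equilibrium equation and their ratio `u_t = y_t / z_t`. -/
def youngCons (e1 G : ℝ) (S : ℕ → ℝ) (t : ℕ) : ℝ := e1 * G ^ t - S t

def oldCons (e2 G : ℝ) (S : ℕ → ℝ) (t : ℕ) : ℝ := e2 * G ^ (t + 1) + S (t + 1)

noncomputable def consRatio (e1 e2 G : ℝ) (S : ℕ → ℝ) (t : ℕ) : ℝ :=
  youngCons e1 G S t / oldCons e2 G S t

namespace IsEquilibrium

variable {c cy cz cyy cyz czz : ℝ → ℝ → ℝ} {e1 e2 G γ m : ℝ} {S : ℕ → ℝ}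

lemma youngCons_pos (hS : IsEquilibrium c cy cz e1 e2 G γ m S) (t : ℕ) :
    0 < youngCons e1 G S t :=
  sub_pos.2 (hS t).2.1

lemma le_oldCons (hS : IsEquilibrium c cy cz e1 e2 G γ m S) (t : ℕ) :
    e2 * G ^ (t + 1) ≤ oldCons e2 G S t :=
  le_add_of_nonneg_right (hS (t + 1)).1.le

lemma oldCons_pos (hS : IsEquilibrium c cy cz e1 e2 G γ m S) (he2 : 0 < e2) (hG : 0 < G)
    (t : ℕ) : 0 < oldCons e2 G S t :=
  (by positivity : 0 < e2 * G ^ (t + 1)).trans_le (hS.le_oldCons t)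

lemma oldCons_le (hS : IsEquilibrium c cy cz e1 e2 G γ m S) (t : ℕ) :
    oldCons e2 G S t ≤ (e1 + e2) * G ^ (t + 1) := by
  have := (hS (t + 1)).2.1
  unfold oldCons
  linarith

lemma consRatio_pos (hS : IsEquilibrium c cy cz e1 e2 G γ m S) (he2 : 0 < e2) (hG : 0 < G)
    (t : ℕ) : 0 < consRatio e1 e2 G S t :=
  div_pos (hS.youngCons_pos t) (hS.oldCons_pos he2 hG t)

lemma eq_consRatio (hC : AssumptionC c cy cz cyy cyz czz)
    (hS : IsEquilibrium c cy cz e1 e2 G γ m S) (he2 : 0 < e2) (hG : 0 < G) (t : ℕ) :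
    S (t + 1) * cz (consRatio e1 e2 G S t) 1 =
      S t * cy (consRatio e1 e2 G S t) 1 -
        m * (oldCons e2 G S t * c (consRatio e1 e2 G S t) 1) ^ γ := by
  have hy := hS.youngCons_pos t
  have hz := hS.oldCons_pos he2 hG t
  rw [consRatio, ← hC.c_eq_mul_c_div hy hz, ← hC.cy_eq_cy_div hy hz, ← hC.cz_eq_cz_div hy hz]
  exact (hS t).2.2

lemma rent_eq (hC : AssumptionC c cy cz cyy cyz czz)
    (hS : IsEquilibrium c cy cz e1 e2 G γ m S) (he2 : 0 < e2) (hG : 0 < G) (t : ℕ) :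
    rent c cy e1 e2 G γ m S t =
      m * (oldCons e2 G S t * c (consRatio e1 e2 G S t) 1) ^ γ / cy (consRatio e1 e2 G S t) 1 := by
  have hy := hS.youngCons_pos t
  have hz := hS.oldCons_pos he2 hG t
  rw [consRatio, ← hC.c_eq_mul_c_div hy hz, ← hC.cy_eq_cy_div hy hz]
  rfl

lemma price_eq (hC : AssumptionC c cy cz cyy cyz czz)
    (hS : IsEquilibrium c cy cz e1 e2 G γ m S) (he2 : 0 < e2) (hG : 0 < G) (t : ℕ) :
    price c cy e1 e2 G γ m S t =
      S (t + 1) * cz (consRatio e1 e2 G S t) 1 / cy (consRatio e1 e2 G S t) 1 := by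
  have hcy := (hC.cy_pos (hS.consRatio_pos he2 hG t) one_pos).ne'
  rw [price, hS.rent_eq hC he2 hG, eq_div_iff hcy, sub_mul, div_mul_cancel₀ _ hcy]
  exact (hS.eq_consRatio hC he2 hG t).symm

lemma price_pos (hC : AssumptionC c cy cz cyy cyz czz)
    (hS : IsEquilibrium c cy cz e1 e2 G γ m S) (he2 : 0 < e2) (hG : 0 < G) (t : ℕ) :
    0 < price c cy e1 e2 G γ m S t := by
  have hu := hS.consRatio_pos he2 hG t
  rw [hS.price_eq hC he2 hG]
  exact div_pos (mul_pos (hS (t + 1)).1 (hC.cz_pos hu one_pos)) (hC.cy_pos hu one_pos)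

lemma rpow_lt_of_le_consRatio (hC : AssumptionC c cy cz cyy cyz czz)
    (hS : IsEquilibrium c cy cz e1 e2 G γ m S) (he2 : 0 < e2) (hG : 0 < G) (hγ : 0 ≤ γ)
    (hm : 0 < m) {ε : ℝ} (hε : 0 < ε) {t : ℕ} (hle : ε ≤ consRatio e1 e2 G S t) :
    m * (G * e2 * c ε 1) ^ γ * (G ^ t) ^ γ < e1 * cy ε 1 * G ^ t := by
  have hu : 0 < consRatio e1 e2 G S t := hε.trans_le hle
  have hcε := hC.c_pos hε one_pos
  have hz : G * e2 * G ^ t ≤ oldCons e2 G S t :=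
    (by ring : G * e2 * G ^ t = e2 * G ^ (t + 1)).trans_le (hS.le_oldCons t)
  have hc := hC.monotoneOn_c_one hε hu hle
  calc m * (G * e2 * c ε 1) ^ γ * (G ^ t) ^ γ
      = m * (G * e2 * G ^ t * c ε 1) ^ γ := by
        rw [mul_assoc m, ← mul_rpow (by positivity) (by positivity)]
        ring_nf
    _ ≤ m * (oldCons e2 G S t * c (consRatio e1 e2 G S t) 1) ^ γ := by
        gcongr
        exact (hS.oldCons_pos he2 hG t).le
    _ = S t * cy (consRatio e1 e2 G S t) 1 - S (t + 1) * cz (consRatio e1 e2 G S t) 1 := by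
        linarith [hS.eq_consRatio hC he2 hG t]
    _ < S t * cy (consRatio e1 e2 G S t) 1 :=
        sub_lt_self _ (mul_pos (hS (t + 1)).1 (hC.cz_pos hu one_pos))
    _ ≤ S t * cy ε 1 := by
        gcongr
        · exact (hS t).1.le
        · exact hC.antitoneOn_cy_one hε hu hle
    _ < e1 * cy ε 1 * G ^ t := by
        rw [mul_right_comm]
        exact mul_lt_mul_of_pos_right (hS t).2.1 (hC.cy_pos hε one_pos)

lemma eventually_consRatio_lt (hC : AssumptionC c cy cz cyy cyz czz)
    (hS : IsEquilibrium c cy cz e1 e2 G γ m S) (he2 : 0 < e2) (hG : 1 < G) (hγ : 1 < γ)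
    (hm : 0 < m) {ε : ℝ} (hε : 0 < ε) : ∀ᶠ t in atTop, consRatio e1 e2 G S t < ε := by
  have hG0 : 0 < G := one_pos.trans hG
  have hA : 0 < m * (G * e2 * c ε 1) ^ γ := by
    have := hC.c_pos hε one_pos
    positivity
  have hT : Tendsto (fun t : ℕ => (G ^ t) ^ (γ - 1)) atTop atTop :=
    (tendsto_rpow_atTop (by linarith)).comp (tendsto_pow_atTop_atTop_of_one_lt hG)
  filter_upwards [(hT.const_mul_atTop hA).eventually_gt_atTop (e1 * cy ε 1)] with t ht
  by_contra! hle
  have hlt := hS.rpow_lt_of_le_consRatio hC he2 hG0 (by linarith) hm hε hle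
  have hGt : 0 < G ^ t := pow_pos hG0 t
  rw [rpow_sub_one hGt.ne', mul_div_assoc', lt_div_iff₀ hGt] at ht
  linarith

lemma tendsto_consRatio (hC : AssumptionC c cy cz cyy cyz czz)
    (hS : IsEquilibrium c cy cz e1 e2 G γ m S) (he2 : 0 < e2) (hG : 1 < G) (hγ : 1 < γ)
    (hm : 0 < m) : Tendsto (consRatio e1 e2 G S) atTop (𝓝[>] 0) := by
  have hpos := hS.consRatio_pos he2 (one_pos.trans hG)
  refine tendsto_nhdsWithin_iff.2 ⟨tendsto_order.2 ⟨?_, ?_⟩, Eventually.of_forall hpos⟩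
  · exact fun a ha => Eventually.of_forall fun t => ha.trans (hpos t)
  · exact fun ε hε => hS.eventually_consRatio_lt hC he2 hG hγ hm hε

lemma tendsto_youngCons_div (hC : AssumptionC c cy cz cyy cyz czz)
    (hS : IsEquilibrium c cy cz e1 e2 G γ m S) (he1 : 0 < e1) (he2 : 0 < e2) (hG : 1 < G)
    (hγ : 1 < γ) (hm : 0 < m) :
    Tendsto (fun t => youngCons e1 G S t / (e1 * G ^ t)) atTop (𝓝 0) := by
  have hG0 : 0 < G := one_pos.trans hG
  have hu := (hS.tendsto_consRatio hC he2 hG hγ hm).mono_right nhdsWithin_le_nhds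
  refine squeeze_zero (fun t => (div_pos (hS.youngCons_pos t) (by positivity)).le)
    (fun t => ?_) (by simpa using hu.mul_const ((e1 + e2) * G / e1))
  have hz := hS.oldCons_pos he2 hG0 t
  have hE : 0 < e1 * G ^ t := by positivity
  calc youngCons e1 G S t / (e1 * G ^ t)
      = consRatio e1 e2 G S t * (oldCons e2 G S t / (e1 * G ^ t)) := by
        rw [consRatio, ← mul_div_assoc, div_mul_cancel₀ _ hz.ne']
    _ ≤ consRatio e1 e2 G S t * ((e1 + e2) * G / e1) := by
        refine mul_le_mul_of_nonneg_left ?_ (hS.consRatio_pos he2 hG0 t).le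
        rw [div_le_div_iff₀ hE he1]
        have := hS.oldCons_le t
        rw [pow_succ] at this
        nlinarith

lemma tendsto_savings_div (hC : AssumptionC c cy cz cyy cyz czz)
    (hS : IsEquilibrium c cy cz e1 e2 G γ m S) (he1 : 0 < e1) (he2 : 0 < e2) (hG : 1 < G)
    (hγ : 1 < γ) (hm : 0 < m) :
    Tendsto (fun t => S t / (e1 * G ^ t)) atTop (𝓝 1) := by
  have hE : ∀ t, e1 * G ^ t ≠ 0 := fun t => by positivity
  have h := (tendsto_const_nhds (x := (1 : ℝ))).sub
    (hS.tendsto_youngCons_div hC he1 he2 hG hγ hm)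
  rw [sub_zero] at h
  refine h.congr fun t => ?_
  rw [youngCons, sub_div, div_self (hE t), sub_sub_cancel]

lemma tendsto_savings_succ_div (hC : AssumptionC c cy cz cyy cyz czz)
    (hS : IsEquilibrium c cy cz e1 e2 G γ m S) (he1 : 0 < e1) (he2 : 0 < e2) (hG : 1 < G)
    (hγ : 1 < γ) (hm : 0 < m) :
    Tendsto (fun t => S (t + 1) / (e1 * G ^ t)) atTop (𝓝 G) := by
  have hG0 : G ≠ 0 := (one_pos.trans hG).ne'
  have h :=
    ((hS.tendsto_savings_div hC he1 he2 hG hγ hm).comp (tendsto_add_atTop_nat 1)).const_mul G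
  rw [mul_one] at h
  refine h.congr fun t => ?_
  simp only [Function.comp_apply, pow_succ]
  field_simp

lemma tendsto_price_div (hC : AssumptionC c cy cz cyy cyz czz)
    (hS : IsEquilibrium c cy cz e1 e2 G γ m S) (he1 : 0 < e1) (he2 : 0 < e2) (hG : 1 < G)
    (hγ : 1 < γ) (hm : 0 < m) :
    Tendsto (fun t => price c cy e1 e2 G γ m S t / (e1 * G ^ t)) atTop (𝓝[>] 0) := by
  have hG0 : 0 < G := one_pos.trans hG
  have hu := hS.tendsto_consRatio hC he2 hG hγ hm
  have hpos := hS.consRatio_pos he2 hG0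
  have hinv : Tendsto (fun t => (cy (consRatio e1 e2 G S t) 1)⁻¹) atTop (𝓝 0) :=
    ((hC.inada_y one_pos).comp hu).inv_tendsto_atTop
  have hle : ∀ᶠ t in atTop, price c cy e1 e2 G γ m S t / (e1 * G ^ t) ≤
      G * cz 1 1 * (cy (consRatio e1 e2 G S t) 1)⁻¹ := by
    filter_upwards [hS.eventually_consRatio_lt hC he2 hG hγ hm one_pos] with t ht
    have hE : 0 < e1 * G ^ t := by positivity
    have hcy := hC.cy_pos (hpos t) one_pos
    have hS1 : S (t + 1) ≤ G * (e1 * G ^ t) := by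
      have := (hS (t + 1)).2.1
      rw [pow_succ] at this
      linarith
    rw [hS.price_eq hC he2 hG0, div_div, div_le_iff₀ (mul_pos hcy hE)]
    calc S (t + 1) * cz (consRatio e1 e2 G S t) 1 ≤ G * (e1 * G ^ t) * cz 1 1 :=
          mul_le_mul hS1 (hC.monotoneOn_cz_one (hpos t) (mem_Ioi.2 one_pos) ht.le)
            (hC.cz_pos (hpos t) one_pos).le (by positivity)
      _ = G * cz 1 1 * (cy (consRatio e1 e2 G S t) 1)⁻¹ *
            (cy (consRatio e1 e2 G S t) 1 * (e1 * G ^ t)) := by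
          field_simp
  have hP : ∀ t, 0 < price c cy e1 e2 G γ m S t / (e1 * G ^ t) :=
    fun t => div_pos (hS.price_pos hC he2 hG0 t) (by positivity)
  refine tendsto_nhdsWithin_iff.2 ⟨?_, Eventually.of_forall hP⟩
  exact squeeze_zero' (Eventually.of_forall fun t => (hP t).le) hle
    (by simpa using hinv.const_mul (G * cz 1 1))

lemma tendsto_rent_div (hC : AssumptionC c cy cz cyy cyz czz)
    (hS : IsEquilibrium c cy cz e1 e2 G γ m S) (he1 : 0 < e1) (he2 : 0 < e2) (hG : 1 < G)
    (hγ : 1 < γ) (hm : 0 < m) :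
    Tendsto (fun t => rent c cy e1 e2 G γ m S t / (e1 * G ^ t)) atTop (𝓝 1) := by
  have h := (hS.tendsto_savings_div hC he1 he2 hG hγ hm).sub
    ((hS.tendsto_price_div hC he1 he2 hG hγ hm).mono_right nhdsWithin_le_nhds)
  rw [sub_zero] at h
  refine h.congr fun t => ?_
  rw [price, ← sub_div, sub_sub_cancel]

lemma tendsto_irate (hC : AssumptionC c cy cz cyy cyz czz)
    (hS : IsEquilibrium c cy cz e1 e2 G γ m S) (he1 : 0 < e1) (he2 : 0 < e2) (hG : 1 < G)
    (hγ : 1 < γ) (hm : 0 < m) :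
    Tendsto (irate c cy e1 e2 G γ m S) atTop atTop := by
  have h := (hS.tendsto_savings_succ_div hC he1 he2 hG hγ hm).pos_mul_atTop (one_pos.trans hG)
    (hS.tendsto_price_div hC he1 he2 hG hγ hm).inv_tendsto_nhdsGT_zero
  refine h.congr fun t => ?_
  have hE : e1 * G ^ t ≠ 0 := by
    have := one_pos.trans hG
    positivity
  rw [Pi.inv_apply, inv_div, div_mul_div_cancel₀ hE, irate]

lemma tendsto_price_div_rent (hC : AssumptionC c cy cz cyy cyz czz)
    (hS : IsEquilibrium c cy cz e1 e2 G γ m S) (he1 : 0 < e1) (he2 : 0 < e2) (hG : 1 < G)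
    (hγ : 1 < γ) (hm : 0 < m) :
    Tendsto (fun t => price c cy e1 e2 G γ m S t / rent c cy e1 e2 G γ m S t) atTop (𝓝 0) := by
  have h := ((hS.tendsto_price_div hC he1 he2 hG hγ hm).mono_right nhdsWithin_le_nhds).div
    (hS.tendsto_rent_div hC he1 he2 hG hγ hm) one_ne_zero
  rw [zero_div] at h
  refine h.congr fun t => ?_
  have hE : e1 * G ^ t ≠ 0 := by
    have := one_pos.trans hG
    positivity
  exact div_div_div_cancel_right₀ hE _ _

end IsEquilibrium

/-- Equilibrium with elasticity of substitution below 1 (`γ > 1`): in every equilibrium,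
`S_t/(e1·G^t) → 1`, `r_t/(e1·G^t) → 1`, `P_t/(e1·G^t) → 0`, `R_t → ∞`, and the
price-rent ratio `P_t/r_t → 0`. -/
theorem stmt_17 (c cy cz cyy cyz czz : ℝ → ℝ → ℝ)
    (hC : AssumptionC c cy cz cyy cyz czz) (e1 e2 G γ m : ℝ)
    (he1 : 0 < e1) (he2 : 0 < e2) (hG : 1 < G) (hγ : 1 < γ) (hm : 0 < m)
    (S : ℕ → ℝ) (hS : IsEquilibrium c cy cz e1 e2 G γ m S) :
    Tendsto (fun t : ℕ => S t / (e1 * G ^ t)) atTop (𝓝 1) ∧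
    Tendsto (fun t : ℕ => rent c cy e1 e2 G γ m S t / (e1 * G ^ t)) atTop (𝓝 1) ∧
    Tendsto (fun t : ℕ => price c cy e1 e2 G γ m S t / (e1 * G ^ t)) atTop (𝓝 0) ∧
    Tendsto (fun t : ℕ => irate c cy e1 e2 G γ m S t) atTop atTop ∧
    Tendsto (fun t : ℕ => price c cy e1 e2 G γ m S t / rent c cy e1 e2 G γ m S t)
      atTop (𝓝 0) :=
  ⟨hS.tendsto_savings_div hC he1 he2 hG hγ hm, hS.tendsto_rent_div hC he1 he2 hG hγ hm,
    (hS.tendsto_price_div hC he1 he2 hG hγ hm).mono_right nhdsWithin_le_nhds,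
    hS.tendsto_irate hC he1 he2 hG hγ hm, hS.tendsto_price_div_rent hC he1 he2 hG hγ hm⟩
end

section
/- (Unique steady state with log utility, γ = 1.) Let G > 1, w > 0, m > 0. Then the function f(s) := log c(1−s, G·(w+s)) + m·log s is strictly concave on (0,1) with f'(s) → ∞ as s → 0⁺ and f'(s) → −∞ as s → 1⁻, and there exists a unique s* ∈ (0,1) satisfying G·s*·c_z(1−s*, G·(w+s*)) = s*·c_y(1−s*, G·(w+s*)) − m·c(1−s*, G·(w+s*)); this s* is the unique maximizer of f on (0,1). -/
open Real Filter Set Topology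

/-!
By homogeneity `c y z = z * φ (y / z)` with `φ = c · 1` concave, so `c` is concave on the open
quadrant (it is the perspective of `φ`). Hence `s ↦ log c(1 - s, G(w + s))` is concave, and adding
the strictly concave `m log s` makes the objective `f` strictly concave. Homogeneity also gives the
chain rule `f' = (G c_z - c_y) / c + m / s` and Euler's identity `y c_y + z c_z = c`. Near `0` the
first term of `f'` is bounded below (it is antitone) while `m / s → ∞`; near `1` Euler gives
`G c_z / c ≤ 1 / w`, `c` stays bounded and `c_y → ∞` by the Inada condition. Darboux's theorem then
yields a zero of `f'`; by strict concavity it is the only critical point and the unique maximiser,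
and the steady-state equation is `f' = 0` multiplied by `c s`.
-/

lemma StrictConcaveOn.const_mul {E : Type*} [AddCommGroup E] [Module ℝ E] {S : Set E}
    {f : E → ℝ} {a : ℝ} (hf : StrictConcaveOn ℝ S f) (ha : 0 < a) :
    StrictConcaveOn ℝ S (fun x => a * f x) :=
  ⟨hf.1, fun x hx y hy hxy s t hs ht hst => by
    have := mul_lt_mul_of_pos_left (hf.2 hx hy hxy hs ht hst) ha
    simp only [smul_eq_mul] at this ⊢
    linarith⟩

lemma ConcaveOn.log {E : Type*} [AddCommGroup E] [Module ℝ E] {S : Set E} {k : E → ℝ}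
    (hk : ConcaveOn ℝ S k) (hpos : ∀ x ∈ S, 0 < k x) : ConcaveOn ℝ S (fun x => Real.log (k x)) :=
  ⟨hk.1, fun x hx y hy a b ha hb hab =>
    calc a • Real.log (k x) + b • Real.log (k y) ≤ Real.log (a • k x + b • k y) :=
          strictConcaveOn_log_Ioi.concaveOn.2 (hpos x hx) (hpos y hy) ha hb hab
      _ ≤ Real.log (k (a • x + b • y)) :=
          log_le_log (convex_Ioi (0:ℝ) (hpos x hx) (hpos y hy) ha hb hab) (hk.2 hx hy ha hb hab)⟩

lemma ConcaveOn.perspective {φ : ℝ → ℝ} (hφ : ConcaveOn ℝ (Ioi 0) φ) :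
    ConcaveOn ℝ (Ioi 0 ×ˢ Ioi 0) (fun p : ℝ × ℝ => p.2 * φ (p.1 / p.2)) := by
  refine ⟨(convex_Ioi 0).prod (convex_Ioi 0), ?_⟩
  rintro ⟨y₁, z₁⟩ ⟨hy₁, hz₁⟩ ⟨y₂, z₂⟩ ⟨hy₂, hz₂⟩ a b ha hb hab
  simp only [mem_Ioi] at hy₁ hz₁ hy₂ hz₂
  simp only [Prod.smul_mk, Prod.mk_add_mk, smul_eq_mul]
  have hZ : 0 < a * z₁ + b * z₂ := convex_Ioi (0:ℝ) hz₁ hz₂ ha hb hab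
  have key := hφ.2 (div_pos hy₁ hz₁) (div_pos hy₂ hz₂)
    (div_nonneg (mul_nonneg ha hz₁.le) hZ.le) (div_nonneg (mul_nonneg hb hz₂.le) hZ.le)
    (by field_simp)
  have harg : a * z₁ / (a * z₁ + b * z₂) * (y₁ / z₁) + b * z₂ / (a * z₁ + b * z₂) * (y₂ / z₂) =
      (a * y₁ + b * y₂) / (a * z₁ + b * z₂) := by
    field_simp
  rw [smul_eq_mul, smul_eq_mul, smul_eq_mul, smul_eq_mul, harg] at key
  calc a * (z₁ * φ (y₁ / z₁)) + b * (z₂ * φ (y₂ / z₂))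
      = (a * z₁ + b * z₂) * (a * z₁ / (a * z₁ + b * z₂) * φ (y₁ / z₁) +
          b * z₂ / (a * z₁ + b * z₂) * φ (y₂ / z₂)) := by
        field_simp
    _ ≤ (a * z₁ + b * z₂) * φ ((a * y₁ + b * y₂) / (a * z₁ + b * z₂)) := by gcongr

lemma StrictConcaveOn.lt_of_hasDerivAt_eq_zero {S : Set ℝ} {f : ℝ → ℝ} {x y : ℝ}
    (hf : StrictConcaveOn ℝ S f) (hx : x ∈ S) (hy : y ∈ S) (hyx : y ≠ x)
    (hfx : HasDerivAt f 0 x) : f y < f x := by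
  rcases hyx.lt_or_gt with h | h
  · have := hf.lt_slope_of_hasDerivAt hy hx h hfx
    rw [slope_def_field] at this
    linarith [(lt_div_iff₀ (sub_pos.mpr h)).mp this]
  · have := hf.slope_lt_of_hasDerivAt hx hy h hfx
    rw [slope_def_field] at this
    linarith [(div_lt_iff₀ (sub_pos.mpr h)).mp this]

lemma StrictConcaveOn.existsUnique_hasDerivAt_eq_zero {f f' : ℝ → ℝ} {a b : ℝ} (hab : a < b)
    (hf : StrictConcaveOn ℝ (Ioo a b) f) (hf' : ∀ x ∈ Ioo a b, HasDerivAt f (f' x) x)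
    (ha : Tendsto f' (𝓝[>] a) atTop) (hb : Tendsto f' (𝓝[<] b) atBot) :
    ∃! x, x ∈ Ioo a b ∧ f' x = 0 := by
  obtain ⟨p, hp, hpa, hpm⟩ :=
    ((ha.eventually_gt_atTop 0).and (Ioo_mem_nhdsGT (left_lt_add_div_two.mpr hab))).exists
  obtain ⟨q, hq, hqm, hqb⟩ :=
    ((hb.eventually_lt_atBot 0).and (Ioo_mem_nhdsLT (add_div_two_lt_right.mpr hab))).exists
  have hsub : Icc p q ⊆ Ioo a b := Icc_subset_Ioo hpa hqb
  obtain ⟨x, hx, hx0⟩ := exists_hasDerivWithinAt_eq_of_lt_of_gt (hpm.trans hqm).le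
    (fun x hx => (hf' x (hsub hx)).hasDerivWithinAt) hp hq
  have hxS : x ∈ Ioo a b := hsub (Ioo_subset_Icc_self hx)
  refine ⟨x, ⟨hxS, hx0⟩, fun y ⟨hyS, hy0⟩ => by_contra fun hyx => ?_⟩
  exact (hf.lt_of_hasDerivAt_eq_zero hxS hyS hyx (hx0 ▸ hf' x hxS)).not_gt
    (hf.lt_of_hasDerivAt_eq_zero hyS hxS (Ne.symm hyx) (hy0 ▸ hf' y hyS))

namespace AssumptionC

variable {c cy cz cyy cyz czz : ℝ → ℝ → ℝ}

theorem eq_mul_div (hC : AssumptionC c cy cz cyy cyz czz) {y z : ℝ} (hy : 0 < y) (hz : 0 < z) :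
    c y z = z * c (y / z) 1 := by
  have h := hC.homog hz (div_pos hy hz) one_pos
  rwa [mul_div_cancel₀ y hz.ne', mul_one] at h

theorem cy_eq (hC : AssumptionC c cy cz cyy cyz czz) {y z : ℝ} (hy : 0 < y) (hz : 0 < z) :
    cy y z = cy (y / z) 1 := by
  have hin : HasDerivAt (fun u => u / z) (1 / z) y := (hasDerivAt_id' y).div_const z
  have h := ((hC.hderiv_y (div_pos hy hz) one_pos).comp y hin).const_mul z
  have hev : (fun u => c u z) =ᶠ[𝓝 y] fun u => z * c (u / z) 1 := by
    filter_upwards [eventually_gt_nhds hy] with u hu using hC.eq_mul_div hu hz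
  rw [(hC.hderiv_y hy hz).unique (h.congr_of_eventuallyEq hev)]
  field_simp

theorem cz_eq (hC : AssumptionC c cy cz cyy cyz czz) {y z : ℝ} (hy : 0 < y) (hz : 0 < z) :
    cz y z = c (y / z) 1 - y / z * cy (y / z) 1 := by
  have hin : HasDerivAt (fun v => y / v) ((0 * z - y * 1) / z ^ 2) z :=
    (hasDerivAt_const z y).div (hasDerivAt_id' z) hz.ne'
  have h : HasDerivAt (fun v => v * c (y / v) 1)
      (1 * c (y / z) 1 + z * (cy (y / z) 1 * ((0 * z - y * 1) / z ^ 2))) z :=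
    (hasDerivAt_id' z).mul ((hC.hderiv_y (div_pos hy hz) one_pos).comp z hin)
  have hev : (fun v => c y v) =ᶠ[𝓝 z] fun v => v * c (y / v) 1 := by
    filter_upwards [eventually_gt_nhds hz] with v hv using hC.eq_mul_div hy hv
  rw [(hC.hderiv_z hy hz).unique (h.congr_of_eventuallyEq hev)]
  field_simp
  ring

theorem euler (hC : AssumptionC c cy cz cyy cyz czz) {y z : ℝ} (hy : 0 < y) (hz : 0 < z) :
    y * cy y z + z * cz y z = c y z := by
  rw [hC.cy_eq hy hz, hC.cz_eq hy hz, hC.eq_mul_div hy hz]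
  field_simp
  ring

theorem mul_cz_lt (hC : AssumptionC c cy cz cyy cyz czz) {y z : ℝ} (hy : 0 < y) (hz : 0 < z) :
    z * cz y z < c y z := by
  linarith [hC.euler hy hz, mul_pos hy (hC.cy_pos hy hz)]

theorem hasDerivAt_comp (hC : AssumptionC c cy cz cyy cyz czz) {y z : ℝ → ℝ} {y' z' s : ℝ}
    (hy : HasDerivAt y y' s) (hz : HasDerivAt z z' s) (hys : 0 < y s) (hzs : 0 < z s) :
    HasDerivAt (fun t => c (y t) (z t)) (cy (y s) (z s) * y' + cz (y s) (z s) * z') s := by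
  have h := hz.mul ((hC.hderiv_y (div_pos hys hzs) one_pos).comp s (hy.div hz hzs.ne'))
  have hev : (fun t => c (y t) (z t)) =ᶠ[𝓝 s] fun t => z t * c (y t / z t) 1 := by
    filter_upwards [hy.continuousAt.eventually (eventually_gt_nhds hys),
      hz.continuousAt.eventually (eventually_gt_nhds hzs)] with t hyt hzt
    exact hC.eq_mul_div hyt hzt
  refine (h.congr_of_eventuallyEq hev).congr_deriv ?_
  simp only [Function.comp_apply, Pi.div_apply]
  rw [hC.cy_eq hys hzs, hC.cz_eq hys hzs]
  field_simp
  ring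

theorem concaveOn (hC : AssumptionC c cy cz cyy cyz czz) :
    ConcaveOn ℝ (Ioi 0 ×ˢ Ioi 0) (fun p : ℝ × ℝ => c p.1 p.2) := by
  have hφ : ConcaveOn ℝ (Ioi 0) (fun t => c t 1) := by
    refine concaveOn_of_hasDerivWithinAt2_nonpos (f' := fun t => cy t 1) (f'' := fun t => cyy t 1)
      (convex_Ioi 0)
      (fun t ht => (hC.hderiv_y ht one_pos).continuousAt.continuousWithinAt) ?_ ?_ ?_ <;>
      simp only [interior_Ioi, mem_Ioi]
    · exact fun t ht => (hC.hderiv_y ht one_pos).hasDerivWithinAt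
    · exact fun t ht => (hC.hderiv_yy ht one_pos).hasDerivWithinAt
    · exact fun t ht => (hC.cyy_neg ht one_pos).le
  exact hφ.perspective.congr fun p ⟨hy, hz⟩ => (hC.eq_mul_div hy hz).symm

theorem monotoneOn_left (hC : AssumptionC c cy cz cyy cyz czz) {z : ℝ} (hz : 0 < z) :
    MonotoneOn (fun y => c y z) (Ioi 0) :=
  monotoneOn_of_hasDerivWithinAt_nonneg (convex_Ioi 0)
    (fun _ hy => (hC.hderiv_y hy hz).continuousAt.continuousWithinAt)
    (fun y hy => (hC.hderiv_y (interior_subset hy : y ∈ Ioi 0) hz).hasDerivWithinAt)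
    (fun y hy => (hC.cy_pos (interior_subset hy : y ∈ Ioi 0) hz).le)

theorem monotoneOn_right (hC : AssumptionC c cy cz cyy cyz czz) {y : ℝ} (hy : 0 < y) :
    MonotoneOn (fun z => c y z) (Ioi 0) :=
  monotoneOn_of_hasDerivWithinAt_nonneg (convex_Ioi 0)
    (fun _ hz => (hC.hderiv_z hy hz).continuousAt.continuousWithinAt)
    (fun z hz => (hC.hderiv_z hy (interior_subset hz : z ∈ Ioi 0)).hasDerivWithinAt)
    (fun z hz => (hC.cz_pos hy (interior_subset hz : z ∈ Ioi 0)).le)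

theorem mono (hC : AssumptionC c cy cz cyy cyz czz) {y₁ y₂ z₁ z₂ : ℝ} (hy₁ : 0 < y₁)
    (hz₁ : 0 < z₁) (hy : y₁ ≤ y₂) (hz : z₁ ≤ z₂) : c y₁ z₁ ≤ c y₂ z₂ :=
  calc c y₁ z₁ ≤ c y₂ z₁ := hC.monotoneOn_left hz₁ hy₁ (hy₁.trans_le hy) hy
    _ ≤ c y₂ z₂ := hC.monotoneOn_right (hy₁.trans_le hy) hz₁ (hz₁.trans_le hz) hz

variable {G w m s : ℝ}

theorem concaveOn_output (hC : AssumptionC c cy cz cyy cyz czz) (hG : 0 < G) (hw : 0 ≤ w) :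
    ConcaveOn ℝ (Ioo 0 1) (fun s => c (1 - s) (G * (w + s))) := by
  let g : ℝ →ᵃ[ℝ] ℝ × ℝ := AffineMap.lineMap (1, G * w) (0, G * (w + 1))
  have hg : ∀ s, g s = (1 - s, G * (w + s)) := fun s => by
    simp only [g, AffineMap.lineMap_apply_module, Prod.smul_mk, Prod.mk_add_mk, smul_eq_mul]
    ext <;> ring
  refine ((hC.concaveOn.comp_affineMap g).subset (fun s hs => ?_) (convex_Ioo 0 1)).congr
    fun s _ => by simp only [Function.comp_apply, hg]
  rw [mem_preimage, hg]
  exact ⟨sub_pos.mpr hs.2, mul_pos hG (by linarith [hs.1])⟩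

theorem concaveOn_log_output (hC : AssumptionC c cy cz cyy cyz czz) (hG : 0 < G) (hw : 0 ≤ w) :
    ConcaveOn ℝ (Ioo 0 1) (fun s => log (c (1 - s) (G * (w + s)))) :=
  (hC.concaveOn_output hG hw).log fun s hs =>
    hC.c_pos (sub_pos.mpr hs.2) (mul_pos hG (by linarith [hs.1]))

theorem hasDerivAt_log_output (hC : AssumptionC c cy cz cyy cyz czz) (hG : 0 < G)
    (hws : 0 < w + s) (hs : s < 1) :
    HasDerivAt (fun s => log (c (1 - s) (G * (w + s))))
      ((G * cz (1 - s) (G * (w + s)) - cy (1 - s) (G * (w + s))) / c (1 - s) (G * (w + s))) s := by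
  have hy : HasDerivAt (fun s => 1 - s) (-1) s := (hasDerivAt_id' s).const_sub 1
  have hz : HasDerivAt (fun s => G * (w + s)) (G * 1) s :=
    ((hasDerivAt_id' s).const_add w).const_mul G
  have hpos := hC.c_pos (sub_pos.mpr hs) (mul_pos hG hws)
  convert (hC.hasDerivAt_comp hy hz (sub_pos.mpr hs) (mul_pos hG hws)).log hpos.ne' using 1
  ring

theorem strictConcaveOn_objective (hC : AssumptionC c cy cz cyy cyz czz) (hG : 0 < G)
    (hw : 0 ≤ w) (hm : 0 < m) :
    StrictConcaveOn ℝ (Ioo 0 1) (fun s => log (c (1 - s) (G * (w + s))) + m * log s) :=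
  (hC.concaveOn_log_output hG hw).add_strictConcaveOn
    ((strictConcaveOn_log_Ioi.subset Ioo_subset_Ioi_self (convex_Ioo 0 1)).const_mul hm)

theorem hasDerivAt_objective (hC : AssumptionC c cy cz cyy cyz czz) (hG : 0 < G) (hw : 0 ≤ w)
    (hs : s ∈ Ioo 0 1) :
    HasDerivAt (fun s => log (c (1 - s) (G * (w + s))) + m * log s)
      ((G * cz (1 - s) (G * (w + s)) - cy (1 - s) (G * (w + s))) / c (1 - s) (G * (w + s)) +
        m * s⁻¹) s :=
  (hC.hasDerivAt_log_output hG (by linarith [hs.1]) hs.2).add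
    ((hasDerivAt_log hs.1.ne').const_mul m)

theorem steadyState_iff_deriv_objective_eq_zero (hC : AssumptionC c cy cz cyy cyz czz)
    (hG : 0 < G) (hw : 0 ≤ w) (hs : s ∈ Ioo 0 1) :
    G * s * cz (1 - s) (G * (w + s)) = s * cy (1 - s) (G * (w + s)) - m * c (1 - s) (G * (w + s)) ↔
      deriv (fun s => log (c (1 - s) (G * (w + s))) + m * log s) s = 0 := by
  have hc : 0 < c (1 - s) (G * (w + s)) :=
    hC.c_pos (sub_pos.mpr hs.2) (mul_pos hG (by linarith [hs.1]))
  have key : (G * cz (1 - s) (G * (w + s)) - cy (1 - s) (G * (w + s))) / c (1 - s) (G * (w + s)) +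
      m * s⁻¹ = (G * s * cz (1 - s) (G * (w + s)) -
        (s * cy (1 - s) (G * (w + s)) - m * c (1 - s) (G * (w + s)))) /
        (c (1 - s) (G * (w + s)) * s) := by
    field_simp [hs.1.ne']
    ring
  rw [(hC.hasDerivAt_objective hG hw hs).deriv, key, div_eq_zero_iff,
    or_iff_left (mul_pos hc hs.1).ne', sub_eq_zero]

theorem tendsto_deriv_objective_nhdsGT_zero (hC : AssumptionC c cy cz cyy cyz czz) (hG : 0 < G)
    (hw : 0 ≤ w) (hm : 0 < m) :
    Tendsto (deriv fun s => log (c (1 - s) (G * (w + s))) + m * log s) (𝓝[>] 0) atTop := by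
  set E := fun s => (G * cz (1 - s) (G * (w + s)) - cy (1 - s) (G * (w + s))) /
    c (1 - s) (G * (w + s))
  have hE : ∀ s ∈ Ioo (0 : ℝ) 1, HasDerivAt (fun s => log (c (1 - s) (G * (w + s)))) (E s) s :=
    fun s hs => hC.hasDerivAt_log_output hG (by linarith [hs.1]) hs.2
  have hlow : ∀ s ∈ Ioo (0 : ℝ) (1 / 2), E (1 / 2) ≤ E s := fun s hs => by
    have := (hC.concaveOn_log_output hG hw).antitoneOn_deriv
      (fun x hx => (hE x hx).differentiableAt) ⟨hs.1, by linarith [hs.2]⟩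
      (by norm_num : (1 / 2 : ℝ) ∈ Ioo 0 1) hs.2.le
    rwa [(hE s ⟨hs.1, by linarith [hs.2]⟩).deriv, (hE _ (by norm_num)).deriv] at this
  refine tendsto_atTop_mono' _ ?_
    (tendsto_atTop_add_const_left _ (E (1 / 2)) (tendsto_inv_nhdsGT_zero.const_mul_atTop hm))
  filter_upwards [Ioo_mem_nhdsGT (by norm_num : (0 : ℝ) < 1 / 2)] with s hs
  rw [(hC.hasDerivAt_objective hG hw ⟨hs.1, by linarith [hs.2]⟩).deriv]
  linarith [hlow s hs]

theorem tendsto_cy_output_nhdsLT_one (hC : AssumptionC c cy cz cyy cyz czz) (hG : 0 < G)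
    (hw : 0 < w) : Tendsto (fun s => cy (1 - s) (G * (w + s))) (𝓝[<] 1) atTop := by
  have hmem : Ioo (0 : ℝ) 1 ∈ 𝓝[<] 1 := Ioo_mem_nhdsLT one_pos
  have hT : Tendsto (fun s => (1 - s) / (G * (w + s))) (𝓝[<] 1) (𝓝[>] 0) := by
    refine tendsto_nhdsWithin_iff.mpr ⟨?_, ?_⟩
    · have : ContinuousAt (fun s => (1 - s) / (G * (w + s))) 1 :=
        (continuousAt_const.sub continuousAt_id).div (by fun_prop)
          (mul_pos hG (by linarith)).ne'
      simpa using this.tendsto.mono_left nhdsWithin_le_nhds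
    · filter_upwards [hmem] with s hs
      exact div_pos (sub_pos.mpr hs.2) (mul_pos hG (by linarith [hs.1]))
  refine ((hC.inada_y one_pos).comp hT).congr' ?_
  filter_upwards [hmem] with s hs
  exact (hC.cy_eq (sub_pos.mpr hs.2) (mul_pos hG (by linarith [hs.1]))).symm

theorem tendsto_deriv_objective_nhdsLT_one (hC : AssumptionC c cy cz cyy cyz czz) (hG : 0 < G)
    (hw : 0 < w) (hm : 0 < m) :
    Tendsto (deriv fun s => log (c (1 - s) (G * (w + s))) + m * log s) (𝓝[<] 1) atBot := by
  set C := c 1 (G * (w + 1))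
  have hC0 : 0 < C := hC.c_pos one_pos (mul_pos hG (by linarith))
  have hup : Tendsto (fun s => 1 / w + 2 * m + -(cy (1 - s) (G * (w + s)) / C)) (𝓝[<] 1) atBot :=
    tendsto_atBot_add_const_left _ _
      (tendsto_neg_atTop_atBot.comp ((hC.tendsto_cy_output_nhdsLT_one hG hw).atTop_div_const hC0))
  refine tendsto_atBot_mono' _ ?_ hup
  filter_upwards [Ioo_mem_nhdsLT (by norm_num : (1 / 2 : ℝ) < 1)] with s hs
  have hs' : s ∈ Ioo 0 1 := ⟨by linarith [hs.1], hs.2⟩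
  rw [(hC.hasDerivAt_objective hG hw.le hs').deriv]
  have hy : 0 < 1 - s := sub_pos.mpr hs.2
  have hz : 0 < G * (w + s) := mul_pos hG (by linarith [hs.1])
  have hc := hC.c_pos hy hz
  have hcz : G * cz (1 - s) (G * (w + s)) / c (1 - s) (G * (w + s)) ≤ 1 / w := by
    rw [div_le_div_iff₀ hc hw]
    nlinarith [hC.mul_cz_lt hy hz, mul_pos (mul_pos hG (hC.cz_pos hy hz)) hs'.1]
  have hcy : cy (1 - s) (G * (w + s)) / C ≤ cy (1 - s) (G * (w + s)) / c (1 - s) (G * (w + s)) :=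
    div_le_div_of_nonneg_left (hC.cy_pos hy hz).le hc
      (hC.mono hy hz (by linarith [hs.1]) (by nlinarith [hs.2]))
  have hinv : m * s⁻¹ ≤ 2 * m := by
    rw [← div_eq_mul_inv, div_le_iff₀ hs'.1]
    nlinarith [hs.1]
  rw [sub_div]
  linarith

end AssumptionC

/-- Unique steady state with log utility (`γ = 1`): the function
`f(s) = log c(1−s, G(w+s)) + m·log s` is strictly concave on `(0,1)`, `f' → ∞` as
`s → 0⁺` and `f' → −∞` as `s → 1⁻`, there is a unique `s* ∈ (0,1)` satisfying the
steady state condition, and this `s*` is the unique maximizer of `f` on `(0,1)`. -/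
theorem stmt_18 (c cy cz cyy cyz czz : ℝ → ℝ → ℝ)
    (hC : AssumptionC c cy cz cyy cyz czz) (G w m : ℝ)
    (hG : 1 < G) (hw : 0 < w) (hm : 0 < m) :
    StrictConcaveOn ℝ (Ioo (0:ℝ) 1)
      (fun s => Real.log (c (1 - s) (G * (w + s))) + m * Real.log s) ∧
    Tendsto (deriv (fun s => Real.log (c (1 - s) (G * (w + s))) + m * Real.log s))
      (𝓝[>] (0:ℝ)) atTop ∧
    Tendsto (deriv (fun s => Real.log (c (1 - s) (G * (w + s))) + m * Real.log s))
      (𝓝[<] (1:ℝ)) atBot ∧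
    (∃! s : ℝ, s ∈ Ioo (0:ℝ) 1 ∧
      G * s * cz (1 - s) (G * (w + s)) =
        s * cy (1 - s) (G * (w + s)) - m * c (1 - s) (G * (w + s))) ∧
    (∀ s : ℝ, s ∈ Ioo (0:ℝ) 1 →
      G * s * cz (1 - s) (G * (w + s)) =
        s * cy (1 - s) (G * (w + s)) - m * c (1 - s) (G * (w + s)) →
      ∀ u ∈ Ioo (0:ℝ) 1, u ≠ s →
        Real.log (c (1 - u) (G * (w + u))) + m * Real.log u <
          Real.log (c (1 - s) (G * (w + s))) + m * Real.log s) := by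
  have hG₀ : 0 < G := one_pos.trans hG
  set F : ℝ → ℝ := fun s => log (c (1 - s) (G * (w + s))) + m * log s
  have hconc : StrictConcaveOn ℝ (Ioo 0 1) F := hC.strictConcaveOn_objective hG₀ hw.le hm
  have hderiv : ∀ s ∈ Ioo (0 : ℝ) 1, HasDerivAt F (deriv F s) s :=
    fun s hs => (hC.hasDerivAt_objective hG₀ hw.le hs).differentiableAt.hasDerivAt
  have hcrit := fun s (hs : s ∈ Ioo (0 : ℝ) 1) =>
    hC.steadyState_iff_deriv_objective_eq_zero (m := m) hG₀ hw.le hs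
  have htop := hC.tendsto_deriv_objective_nhdsGT_zero hG₀ hw.le hm
  have hbot := hC.tendsto_deriv_objective_nhdsLT_one hG₀ hw hm
  refine ⟨hconc, htop, hbot, ?_, fun s hs hss u hu hus =>
    hconc.lt_of_hasDerivAt_eq_zero hs hu hus ((hcrit s hs).1 hss ▸ hderiv s hs)⟩
  obtain ⟨s, ⟨hs, hs₀⟩, huniq⟩ := hconc.existsUnique_hasDerivAt_eq_zero one_pos hderiv htop hbot
  exact ⟨s, ⟨hs, (hcrit s hs).2 hs₀⟩, fun t ⟨ht, htss⟩ => huniq t ⟨ht, (hcrit t ht).1 htss⟩⟩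
end
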